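/- arXiv:1711.10665 — 3 statements merged into one kernel-verified Lean document; each statement's English description precedes it below -/
import Mathlib

section
/- Let g be a monotone, non-negative submodular function on the subsets of a finite set V, let C assign a positive cost to each element of V (extended additively to sets), and for Γ with 0 < Γ ≤ g(V) let H(Γ) be a minimum-cost subset A with g(A) ≥ Γ. Then for any A ⊆ V with g(A) < Γ, there exists y ∈ V \ A such that (g(A ∪ {y}) − g(A)) / C({y}) ≥ (Γ − g(A)) / C(H(Γ)). -/
theorem stmt_2 {α : Type*} [Fintype α] [DecidableEq α]
    (g : Finset α → ℝ)
    (hmono : ∀ S₁ S₂ : Finset α, S₁ ⊆ S₂ → g S₁ ≤ g S₂)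
    (hnonneg : ∀ S, 0 ≤ g S)
    (hsub : ∀ S₁ S₂ : Finset α, S₁ ⊆ S₂ → ∀ x ∉ S₂,
      g (insert x S₂) - g S₂ ≤ g (insert x S₁) - g S₁)
    (C : α → ℝ) (hC : ∀ u, 0 < C u)
    (Γ : ℝ) (hΓpos : 0 < Γ) (hΓle : Γ ≤ g Finset.univ)
    (H : Finset α) (hH : Γ ≤ g H)
    (hHopt : ∀ B : Finset α, Γ ≤ g B → ∑ u ∈ H, C u ≤ ∑ u ∈ B, C u)
    (A : Finset α) (hA : g A < Γ) :
    ∃ y ∉ A, (Γ - g A) / (∑ u ∈ H, C u) ≤ (g (insert y A) - g A) / C y := by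
  -- key submodularity sum lemma
  have key : ∀ T : Finset α, g (A ∪ T) - g A ≤ ∑ y ∈ T \ A, (g (insert y A) - g A) := by
    intro T
    induction T using Finset.induction with
    | empty => simp
    | @insert x T hx ih =>
      by_cases hxA : x ∈ A
      · have h1 : A ∪ insert x T = A ∪ T := by
          ext z; simp only [Finset.mem_union, Finset.mem_insert]
          constructor
          · rintro (h | rfl | h) <;> tauto
          · tauto
        have h2 : insert x T \ A = T \ A := by
          ext z; simp only [Finset.mem_sdiff, Finset.mem_insert]
          constructor
          · rintro ⟨rfl | h, hz⟩ <;> tauto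
          · tauto
        rw [h1, h2]; exact ih
      · have hxAT : x ∉ A ∪ T := by simp [hxA, hx]
        have h1 : A ∪ insert x T = insert x (A ∪ T) := by
          ext z; simp only [Finset.mem_union, Finset.mem_insert]; tauto
        have h2 : insert x T \ A = insert x (T \ A) := by
          ext z; simp only [Finset.mem_sdiff, Finset.mem_insert]
          constructor
          · rintro ⟨rfl | h, hz⟩ <;> tauto
          · rintro (rfl | ⟨h, hz⟩) <;> tauto
        have hxTA : x ∉ T \ A := by simp [hx]
        rw [h1, h2, Finset.sum_insert hxTA]
        have hs := hsub A (A ∪ T) Finset.subset_union_left x hxAT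
        linarith
  -- H \ A nonempty
  have hHA : (H \ A).Nonempty := by
    by_contra h
    rw [Finset.not_nonempty_iff_eq_empty, Finset.sdiff_eq_empty_iff_subset] at h
    exact absurd (le_trans hH (hmono H A h)) (not_le.mpr hA)
  have hCH : 0 < ∑ u ∈ H, C u := by
    obtain ⟨y, hy⟩ := hHA
    exact Finset.sum_pos' (fun u _ => (hC u).le)
      ⟨y, (Finset.mem_sdiff.mp hy).1, hC y⟩
  set r := (Γ - g A) / (∑ u ∈ H, C u) with hr
  have hrpos : 0 < r := div_pos (by linarith) hCH
  by_contra hcon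
  push_neg at hcon
  -- for each y ∈ H \ A : marginal < r * C y
  have hlt : ∀ y ∈ H \ A, g (insert y A) - g A < r * C y := by
    intro y hy
    have hyA := (Finset.mem_sdiff.mp hy).2
    have := hcon y hyA
    calc g (insert y A) - g A = (g (insert y A) - g A) / C y * C y := by
          rw [div_mul_cancel₀ _ (hC y).ne']
      _ < r * C y := by
          exact mul_lt_mul_of_pos_right this (hC y)
  have hsumlt : ∑ y ∈ H \ A, (g (insert y A) - g A) < ∑ y ∈ H \ A, r * C y :=
    Finset.sum_lt_sum_of_nonempty hHA hlt
  have h1 : Γ - g A ≤ g (A ∪ H) - g A := by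
    have := hmono H (A ∪ H) Finset.subset_union_right
    linarith
  have h2 : ∑ y ∈ H \ A, r * C y ≤ r * ∑ u ∈ H, C u := by
    rw [← Finset.mul_sum]
    apply mul_le_mul_of_nonneg_left _ hrpos.le
    exact Finset.sum_le_sum_of_subset_of_nonneg (Finset.sdiff_subset)
      (fun u _ _ => (hC u).le)
  have h3 : r * ∑ u ∈ H, C u = Γ - g A := by
    rw [hr]; field_simp
  have := key H
  linarith
end

section
/- Let g be a monotone, non-negative, submodular function on subsets of a finite set V of size n with g(V) = n, where each element has unit cost. Let η ∈ (0,n), τ ∈ (0, (n−η)/(2nη+η)], and suppose B ⊆ V satisfies g(B) < (1+τ)η. Then there exists y ∈ V \ B with g(B ∪ {y}) − g(B) ≥ 2τη, and consequently g(B ∪ {y}) ≥ g(B) + 2τη. -/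
private lemma sum_marg {α : Type*} [DecidableEq α]
    (g : Finset α → ℝ)
    (hmono : ∀ S₁ S₂ : Finset α, S₁ ⊆ S₂ → g S₁ ≤ g S₂)
    (hsub : ∀ S₁ S₂ : Finset α, S₁ ⊆ S₂ → ∀ x ∉ S₂,
      g (insert x S₂) - g S₂ ≤ g (insert x S₁) - g S₁)
    (B : Finset α) :
    ∀ T : Finset α, g (B ∪ T) - g B ≤ ∑ y ∈ T, (g (insert y B) - g B) := by
  intro T
  induction T using Finset.induction_on with
  | empty => simp
  | @insert a T ha ih =>
    rw [Finset.sum_insert ha, Finset.union_insert]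
    by_cases haB : a ∈ B ∪ T
    · rw [Finset.insert_eq_self.mpr haB]
      have h1 : 0 ≤ g (insert a B) - g B :=
        sub_nonneg.mpr (hmono _ _ (Finset.subset_insert _ _))
      linarith
    · have h1 := hsub B (B ∪ T) Finset.subset_union_left a haB
      linarith

theorem stmt_10 {α : Type*} [Fintype α] [DecidableEq α]
    (g : Finset α → ℝ)
    (hmono : ∀ S₁ S₂ : Finset α, S₁ ⊆ S₂ → g S₁ ≤ g S₂)
    (hnonneg : ∀ S, 0 ≤ g S)
    (hsub : ∀ S₁ S₂ : Finset α, S₁ ⊆ S₂ → ∀ x ∉ S₂,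
      g (insert x S₂) - g S₂ ≤ g (insert x S₁) - g S₁)
    (n : ℝ) (hn : n = Fintype.card α) (hgV : g Finset.univ = n)
    (η τ : ℝ) (hη0 : 0 < η) (hηn : η < n)
    (hτ0 : 0 < τ) (hτ : τ ≤ (n - η) / (2 * n * η + η))
    (B : Finset α) (hB : g B < (1 + τ) * η) :
    ∃ y ∉ B, 2 * τ * η ≤ g (insert y B) - g B ∧
      g B + 2 * τ * η ≤ g (insert y B) := by
  have hden : 0 < 2 * n * η + η := by nlinarith
  have hkey : τ * (2 * n * η + η) ≤ n - η := by
    rw [← le_div_iff₀ hden]; exact hτ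
  -- (1+τ)η ≤ n, hence g B < n = g univ, so B ≠ univ
  have hlt : (1 + τ) * η < n := by nlinarith
  have hBu : B ≠ Finset.univ := by
    intro h; rw [h, hgV] at hB; linarith
  set T : Finset α := Finset.univ \ B with hT
  have hTne : T.Nonempty := by
    rw [Finset.sdiff_nonempty]
    exact fun h => hBu (Finset.univ_subset_iff.mp h)
  have hBT : B ∪ T = Finset.univ := by
    simp [hT, Finset.union_sdiff_of_subset (Finset.subset_univ B)]
  have hsum : n - g B ≤ ∑ y ∈ T, (g (insert y B) - g B) := by
    have := sum_marg g hmono hsub B T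
    rw [hBT, hgV] at this; linarith
  by_contra hcon
  push_neg at hcon
  have hall : ∀ y ∈ T, g (insert y B) - g B < 2 * τ * η := by
    intro y hy
    have hyB : y ∉ B := (Finset.mem_sdiff.mp hy).2
    rcases lt_or_ge (g (insert y B) - g B) (2 * τ * η) with h | h
    · exact h
    · exact absurd (by linarith) (not_le.mpr ((hcon y hyB h).trans_le (by linarith)))
  have hsumlt : ∑ y ∈ T, (g (insert y B) - g B) < T.card * (2 * τ * η) := by
    calc ∑ y ∈ T, (g (insert y B) - g B) < ∑ _y ∈ T, 2 * τ * η :=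
          Finset.sum_lt_sum_of_nonempty hTne hall
      _ = T.card * (2 * τ * η) := by rw [Finset.sum_const, nsmul_eq_mul]
  have hcard : (T.card : ℝ) ≤ n := by
    rw [hn]; exact_mod_cast Finset.card_le_card (Finset.subset_univ T)
  have h2 : 0 < 2 * τ * η := by positivity
  have : (T.card : ℝ) * (2 * τ * η) ≤ n * (2 * τ * η) :=
    mul_le_mul_of_nonneg_right hcard h2.le
  nlinarith
end

section
/- Let g be a monotone, non-negative, submodular function on subsets of a finite set V, let each element have unit cost, and let a greedy sequence B_0 = ∅, B_{i+1} = B_i ∪ {x_{i+1}} be built by adding at step i+1 an element maximizing the marginal gain of g. Let s = min{i : g(B_i) ≥ (1−τ)η} and t = min{i : g(B_i) ≥ (1+τ)η}. If g(V) = n = |V|, 0 < η < n, and 0 < τ ≤ (n−η)/(2nη+η), then t ≤ s + 1. -/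
theorem stmt_11 {α : Type*} [Fintype α] [DecidableEq α]
    (g : Finset α → ℝ)
    (hmono : ∀ S₁ S₂ : Finset α, S₁ ⊆ S₂ → g S₁ ≤ g S₂)
    (hnonneg : ∀ S, 0 ≤ g S)
    (hsub : ∀ S₁ S₂ : Finset α, S₁ ⊆ S₂ → ∀ x ∉ S₂,
      g (insert x S₂) - g S₂ ≤ g (insert x S₁) - g S₁)
    (n : ℝ) (hn : n = Fintype.card α) (hgV : g Finset.univ = n)
    (η τ : ℝ) (hη0 : 0 < η) (hηn : η < n)
    (hτ0 : 0 < τ) (hτ : τ ≤ (n - η) / (2 * n * η + η))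
    (B : ℕ → Finset α) (x : ℕ → α)
    (hB0 : B 0 = ∅)
    (hBsucc : ∀ i, B (i + 1) = insert (x (i + 1)) (B i))
    (hgreedy : ∀ i, ∀ u : α,
      g (insert u (B i)) - g (B i) ≤ g (B (i + 1)) - g (B i))
    (s t : ℕ)
    (hs : (1 - τ) * η ≤ g (B s)) (hsmin : ∀ i < s, g (B i) < (1 - τ) * η)
    (ht : (1 + τ) * η ≤ g (B t)) (htmin : ∀ i < t, g (B i) < (1 + τ) * η) :
    t ≤ s + 1 := by
  by_contra h
  push_neg at h
  have hs1t : s + 1 < t := h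
  have hst : s < t := Nat.lt_of_succ_lt hs1t
  have hBs : g (B s) < (1 + τ) * η := htmin s hst
  have hBs1 : g (B (s + 1)) < (1 + τ) * η := htmin (s + 1) hs1t
  have hn0 : 0 < n := lt_trans hη0 hηn
  set S := B s with hS
  set G := g (B (s + 1)) - g (B s) with hG
  have hG0 : 0 ≤ G := by
    have := hgreedy s (x (s + 1))
    have h2 := hmono (B s) (insert (x (s+1)) (B s)) (Finset.subset_insert _ _)
    rw [← hBsucc s] at h2
    linarith [hgreedy s (x (s+1)), hmono (B s) (insert (x (s+1)) (B s)) (Finset.subset_insert _ _)]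
  -- key submodularity sum bound
  have key : ∀ T : Finset α, g (S ∪ T) - g S ≤ ∑ u ∈ T, (g (insert u S) - g S) := by
    intro T
    induction T using Finset.induction_on with
    | empty => simp
    | @insert a T' ha ih =>
      rw [Finset.sum_insert ha]
      have heq : S ∪ insert a T' = insert a (S ∪ T') := by
        ext y; simp [or_comm, or_assoc, or_left_comm]
      rw [heq]
      by_cases haS : a ∈ S ∪ T'
      · rw [Finset.insert_eq_self.mpr haS]
        have : 0 ≤ g (insert a S) - g S := by
          have := hmono S (insert a S) (Finset.subset_insert _ _); linarith
        linarith
      · have := hsub S (S ∪ T') (Finset.subset_union_left) a haS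
        linarith
  have hkey := key (Finset.univ \ S)
  rw [Finset.union_sdiff_of_subset (Finset.subset_univ S)] at hkey
  have hbound : ∀ u ∈ Finset.univ \ S, g (insert u S) - g S ≤ G := by
    intro u _
    exact hgreedy s u
  have hsum : ∑ u ∈ Finset.univ \ S, (g (insert u S) - g S) ≤ (Finset.univ \ S).card * G :=
    by
      calc ∑ u ∈ Finset.univ \ S, (g (insert u S) - g S)
          ≤ ∑ _u ∈ Finset.univ \ S, G := Finset.sum_le_sum hbound
        _ = (Finset.univ \ S).card * G := by rw [Finset.sum_const, nsmul_eq_mul]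
  have hcard : ((Finset.univ \ S).card : ℝ) ≤ n := by
    rw [hn]
    exact_mod_cast Finset.card_le_card (Finset.subset_univ _)
  have h1 : n - g S ≤ n * G := by
    have : ((Finset.univ \ S).card : ℝ) * G ≤ n * G :=
      mul_le_mul_of_nonneg_right hcard hG0
    linarith [hkey, hsum, hgV]
  -- from hτ : 2*n*τ*η ≤ n - (1+τ)*η
  have hden : 0 < 2 * n * η + η := by nlinarith
  have hτ2 : τ * (2 * n * η + η) ≤ n - η := (le_div_iff₀ hden).mp hτ
  have h2 : 2 * n * τ * η ≤ n - (1 + τ) * η := by nlinarith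
  -- so n - g S > 2*n*τ*η
  have h3 : 2 * n * τ * η < n - g S := by nlinarith
  have h4 : 2 * τ * η < G := by nlinarith
  have : (1 + τ) * η ≤ g (B (s + 1)) := by
    have : g (B (s+1)) = g S + G := by rw [hG]; ring
    nlinarith
  linarith
end
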